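/- arXiv:1506.04917 — 5 statements merged into one kernel-verified Lean document; each statement's English description precedes it below -/
import Mathlib

section
/- Let x be a nonempty finite word of length m over a finite alphabet Σ. The number of words of length m+1 in the set of minimal absent words of the language F_x̃ (the set of factors of the circular word determined by x) is exactly the number of distinct rotations of x, i.e., the cardinality of {x⟨i⟩ : 0 ≤ i < m}. Moreover, m+1 is the maximal length of a word in this set. -/
/-!
A word of length `m + 1` in `MAWLang (CircFactors x)` is `a·u·b` with `a·u` and `u·b` circular
factors of length `m`, i.e. rotations of `x`. Being permutations of the same word, `a·u` and `u·b`
force `a = b`, so the word is `y·y[0]` for a rotation `y`; conversely every `y·y[0]` is a minimal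
absent word, since `y[1..]·y[0]` is the next rotation and `y·y[0]` is too long to be a factor.
Hence these words correspond bijectively to the distinct rotations of `x`.
-/

/-- The set of factors of the circular word determined by `x`:
the union over `i < |x|` of the sets of factors of the rotations of `x`. -/
def CircFactors {α : Type*} (x : List α) : Set (List α) :=
  {w | ∃ i < x.length, w <:+: x.rotate i}

/-- The set of minimal absent words of a (factorial) language `L`:
words `a·u·b` that are not in `L` while `a·u ∈ L` and `u·b ∈ L`. -/
def MAWLang {α : Type*} (L : Set (List α)) : Set (List α) :=
  {w | ∃ (a b : α) (u : List α),
    w = a :: (u ++ [b]) ∧ w ∉ L ∧ (a :: u) ∈ L ∧ (u ++ [b]) ∈ L}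

namespace List

variable {α : Type*}

theorem eq_of_cons_perm_append_singleton {a b : α} {u : List α}
    (h : (a :: u).Perm (u ++ [b])) : a = b := by
  have h' : ([a] ++ u).Perm ([b] ++ u) := h.trans (perm_append_singleton b u)
  exact singleton_perm_singleton.1 ((perm_append_right_iff u).1 h')

theorem append_take_one_injective : Function.Injective fun y : List α => y ++ y.take 1 := by
  intro y z h
  have hlen : y.length = z.length := by
    have := congrArg length h
    simp only [length_append, length_take] at this
    omega
  exact (append_inj h hlen).1

end List

section CircFactors

variable {α : Type*} {x w : List α}

theorem length_le_of_mem_circFactors (hw : w ∈ CircFactors x) : w.length ≤ x.length := by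
  obtain ⟨i, -, hinf⟩ := hw
  simpa using hinf.length_le

theorem exists_eq_rotate_of_mem_circFactors (hw : w ∈ CircFactors x)
    (hlen : w.length = x.length) : ∃ i < x.length, w = x.rotate i := by
  obtain ⟨i, hi, hinf⟩ := hw
  exact ⟨i, hi, hinf.eq_of_length (by simp [hlen])⟩

theorem rotate_mem_circFactors (hx : x ≠ []) (i : ℕ) : x.rotate i ∈ CircFactors x :=
  ⟨i % x.length, Nat.mod_lt _ (List.length_pos_iff.2 hx), by rw [List.rotate_mod]⟩

end CircFactors

section MAWLang

variable {α : Type*}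

theorem length_le_of_mem_MAWLang {L : Set (List α)} {n : ℕ} (hL : ∀ v ∈ L, v.length ≤ n)
    {w : List α} (hw : w ∈ MAWLang L) : w.length ≤ n + 1 := by
  obtain ⟨a, b, u, rfl, -, hau, -⟩ := hw
  have := hL _ hau
  simp only [List.length_cons, List.length_append, List.length_nil] at this ⊢
  omega

theorem rotate_append_take_one_mem_MAWLang {x : List α} (hx : x ≠ []) (i : ℕ) :
    x.rotate i ++ (x.rotate i).take 1 ∈ MAWLang (CircFactors x) := by
  obtain ⟨a, u, hy⟩ := List.exists_cons_of_ne_nil (mt List.rotate_eq_nil_iff.1 hx : x.rotate i ≠ [])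
  have hlen : (a :: u).length = x.length := by rw [← hy, List.length_rotate]
  have hnext : u ++ [a] = x.rotate (i + 1) := by
    rw [← List.rotate_rotate, hy, List.rotate_cons_succ, List.rotate_zero]
  refine ⟨a, a, u, by simp [hy], fun hmem => ?_, hy ▸ rotate_mem_circFactors hx i,
    hnext ▸ rotate_mem_circFactors hx (i + 1)⟩
  have := length_le_of_mem_circFactors hmem
  rw [hy] at this
  simp only [List.length_cons, List.length_append, List.take_succ_cons, List.take_zero] at this hlen
  omega

theorem maw_circFactors_length_succ_eq_image {x : List α} (hx : x ≠ []) :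
    {w ∈ MAWLang (CircFactors x) | w.length = x.length + 1} =
      (fun y => y ++ y.take 1) '' {y | ∃ i < x.length, y = x.rotate i} := by
  ext w
  constructor
  · rintro ⟨⟨a, b, u, rfl, -, hau, hub⟩, hlen⟩
    simp only [List.length_cons, List.length_append, List.length_nil] at hlen
    obtain ⟨i, hi, hi_eq⟩ := exists_eq_rotate_of_mem_circFactors hau (by simp; omega)
    obtain ⟨j, -, hj_eq⟩ := exists_eq_rotate_of_mem_circFactors hub (by simp; omega)
    have hab : a = b := List.eq_of_cons_perm_append_singleton <| by
      rw [hi_eq, hj_eq]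
      exact (x.rotate_perm i).trans (x.rotate_perm j).symm
    exact ⟨a :: u, ⟨i, hi, hi_eq⟩, by simp [hab]⟩
  · rintro ⟨y, ⟨i, -, rfl⟩, rfl⟩
    refine ⟨rotate_append_take_one_mem_MAWLang hx i, ?_⟩
    have : 0 < x.length := List.length_pos_iff.2 hx
    simp only [List.length_append, List.length_take, List.length_rotate]
    omega

end MAWLang

theorem maw_circ_factors_max_length_general {α : Type*} (x : List α) (hx : x ≠ []) :
    {w ∈ MAWLang (CircFactors x) | w.length = x.length + 1}.ncard =
        {y : List α | ∃ i < x.length, y = x.rotate i}.ncard ∧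
      (∀ w ∈ MAWLang (CircFactors x), w.length ≤ x.length + 1) ∧
      (∃ w ∈ MAWLang (CircFactors x), w.length = x.length + 1) := by
  refine ⟨?_, fun w => length_le_of_mem_MAWLang fun _ => length_le_of_mem_circFactors, ?_⟩
  · rw [maw_circFactors_length_succ_eq_image hx,
      Set.ncard_image_of_injective _ List.append_take_one_injective]
  · have hm : 0 < x.length := List.length_pos_iff.2 hx
    exact ⟨_, rotate_append_take_one_mem_MAWLang hx 0, by simp; omega⟩

/-- For a nonempty word `x` of length `m`, the set of minimal absent
words of the language of factors of the circular word `x̃` contains exactly as many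
words of length `m+1` as there are distinct rotations of `x`; moreover `m+1` is the
maximal length of a word in this set (all words have length `≤ m+1` and one of length
`m+1` exists). -/
theorem maw_circ_factors_max_length {α : Type*} [Fintype α] (x : List α) (hx : x ≠ []) :
    {w ∈ MAWLang (CircFactors x) | w.length = x.length + 1}.ncard =
        {y : List α | ∃ i < x.length, y = x.rotate i}.ncard ∧
      (∀ w ∈ MAWLang (CircFactors x), w.length ≤ x.length + 1) ∧
      (∃ w ∈ MAWLang (CircFactors x), w.length = x.length + 1) :=
  maw_circ_factors_max_length_general x hx
end

section
/- Let x be a nonempty finite word of length m over a finite alphabet Σ. If a word w of length m+1 is a minimal absent word of the language F_x̃ of factors of the circular word determined by x, then its maximal proper prefix and its maximal proper suffix are consecutive rotations of x; in particular, w = x⟨i⟩ · x[i] for some 0 ≤ i < m. -/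
/-- For a nonempty word `x` of length `m`, every minimal absent word `w`
of length `m+1` of the language of factors of the circular word `x̃` is of the form
`w = x⟨i⟩ · x[i]` for some `i < m`; in particular its maximal proper prefix and its
maximal proper suffix are the consecutive rotations `x⟨i⟩` and `x⟨(i+1) mod m⟩`. -/
theorem maw_of_max_length_is_rotation_extension {α : Type*} [Fintype α]
    (x : List α) (hx : x ≠ []) (w : List α)
    (hw : w ∈ MAWLang (CircFactors x)) (hlen : w.length = x.length + 1) :
    ∃ i, ∃ hi : i < x.length,
      w = x.rotate i ++ [x.get ⟨i, hi⟩] ∧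
      w.dropLast = x.rotate i ∧
      w.tail = x.rotate ((i + 1) % x.length) := by
  classical
  obtain ⟨a, b, u, hw_eq, hwL, hauL, hubL⟩ := hw
  have hulen : u.length + 1 = x.length := by
    rw [hw_eq] at hlen; simp at hlen; omega
  obtain ⟨i, hi, hinf⟩ := hauL
  have hau : a :: u = x.rotate i := by
    apply hinf.sublist.eq_of_length
    simp [List.length_rotate]; omega
  obtain ⟨j, hj, hinf2⟩ := hubL
  have hub : u ++ [b] = x.rotate j := by
    apply hinf2.sublist.eq_of_length
    simp [List.length_rotate]; omega
  have p1 : (a :: u).Perm x := by rw [hau]; exact x.rotate_perm i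
  have p2 : (u ++ [b]).Perm x := by rw [hub]; exact x.rotate_perm j
  have hperm : (a :: u).Perm (b :: u) :=
    (p1.trans p2.symm).trans (List.perm_append_singleton b u)
  have hab : a = b := by
    have h := hperm.count_eq a
    by_contra hne
    simp [List.count_cons, hne] at h
    exact hne h.symm
  have haget : a = x.get ⟨i, hi⟩ := by
    have hrot : x.rotate i = x.drop i ++ x.take i :=
      List.rotate_eq_drop_append_take hi.le
    have hdrop : x.drop i = x.get ⟨i, hi⟩ :: x.drop (i + 1) :=
      List.drop_eq_getElem_cons hi
    rw [hrot, hdrop] at hau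
    exact (List.cons.injEq _ _ _ _ ▸ hau).1
  refine ⟨i, hi, ?_, ?_, ?_⟩
  · rw [hw_eq, ← hau, ← haget, ← hab]; rfl
  · rw [hw_eq, show a :: (u ++ [b]) = (a :: u) ++ [b] from rfl,
      List.dropLast_concat, hau]
  · rw [hw_eq]
    show u ++ [b] = x.rotate ((i + 1) % x.length)
    rw [List.rotate_mod, ← List.rotate_rotate, ← hau, List.rotate_cons_succ,
      List.rotate_zero, hab]
end

section
/- Let x be a nonempty finite word over a finite alphabet Σ. The set of minimal absent words of the factorial language F_{x̃*} (the set of factors of words in the language x* = {x^k : k ≥ 0}) equals the intersection of the set of minimal absent words of the language F_x̃ (the set of factors of the circular word determined by x) with the set of words of length at most |x|: M_{F_{x̃*}} = M_{F_x̃} ∩ Σ^{≤|x|}. -/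
/-- The factorial language `F_{x̃*}`: all factors of all words in `x* = {x^k : k ≥ 0}`. -/
def StarFactors {α : Type*} (x : List α) : Set (List α) :=
  {w | ∃ k : ℕ, w <:+: (List.replicate k x).flatten}

namespace MAWAux

variable {α : Type*}

/-- The periodic infinite word determined by `x`. -/
def pf (x : List α) (hx : x ≠ []) (n : ℕ) : α :=
  x[n % x.length]'(Nat.mod_lt _ (List.length_pos_iff.mpr hx))

lemma pf_congr (x : List α) (hx : x ≠ []) {n₁ n₂ : ℕ}
    (h : n₁ % x.length = n₂ % x.length) : pf x hx n₁ = pf x hx n₂ := by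
  unfold pf; congr 1

lemma pf_add_len (x : List α) (hx : x ≠ []) (n : ℕ) :
    pf x hx (x.length + n) = pf x hx n :=
  pf_congr x hx (by rw [Nat.add_comm, Nat.add_mod_right])

/-- `w` is the length-`|w|` window of the periodic word at position `s`. -/
def IsWin (x : List α) (hx : x ≠ []) (s : ℕ) (w : List α) : Prop :=
  ∀ t (ht : t < w.length), w[t] = pf x hx (s + t)

lemma flatten_replicate (x : List α) (hx : x ≠ []) (k : ℕ) :
    (List.replicate k x).flatten = (List.range (k * x.length)).map (pf x hx) := by
  induction k with
  | zero => simp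
  | succ k ih =>
    rw [List.replicate_succ, List.flatten_cons, ih, Nat.succ_mul, Nat.add_comm (k * x.length),
      List.range_add, List.map_append]
    congr 1
    · apply List.ext_getElem
      · simp
      · intro n h1 h2
        simp only [List.getElem_map, List.getElem_range]
        unfold pf
        congr 1
        exact (Nat.mod_eq_of_lt h1).symm
    · rw [List.map_map]
      apply List.map_congr_left
      intro n _
      exact (pf_add_len x hx n).symm

lemma getElem_flatten_replicate (x : List α) (hx : x ≠ []) (k n : ℕ)
    (h : n < (List.replicate k x).flatten.length) :
    (List.replicate k x).flatten[n] = pf x hx n := by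
  rw [List.getElem_of_eq (flatten_replicate x hx k) h]
  simp only [List.getElem_map, List.getElem_range]

lemma infix_getElem {w y : List α} (hinf : w <:+: y) :
    ∃ s, s + w.length ≤ y.length ∧
      ∀ t (ht : t < w.length) (h' : s + t < y.length), y[s + t] = w[t] := by
  obtain ⟨l₁, l₂, rfl⟩ := hinf
  refine ⟨l₁.length, by simp only [List.length_append]; omega, ?_⟩
  intro t ht h'
  rw [List.getElem_append_left (show l₁.length + t < (l₁ ++ w).length by
      simp only [List.length_append]; omega),
    List.getElem_append_right (by omega)]
  simp

lemma mem_star_iff (x : List α) (hx : x ≠ []) (w : List α) :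
    w ∈ StarFactors x ↔ ∃ s, IsWin x hx s w := by
  have hm : 0 < x.length := List.length_pos_iff.mpr hx
  constructor
  · rintro ⟨k, hinf⟩
    obtain ⟨s, hsl, hget⟩ := infix_getElem hinf
    refine ⟨s, fun t ht => ?_⟩
    have h' : s + t < (List.replicate k x).flatten.length := by omega
    rw [← hget t ht h', getElem_flatten_replicate x hx k _ h']
  · rintro ⟨s, hs⟩
    refine ⟨s + w.length, ?_⟩
    have hylen : (List.replicate (s + w.length) x).flatten.length
        = (s + w.length) * x.length := by
      rw [flatten_replicate x hx]; simp
    have hbig : s + w.length ≤ (List.replicate (s + w.length) x).flatten.length := by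
      rw [hylen]
      calc s + w.length = (s + w.length) * 1 := by ring
        _ ≤ (s + w.length) * x.length := Nat.mul_le_mul_left _ hm
    have hpre : w <+: (List.replicate (s + w.length) x).flatten.drop s := by
      rw [List.prefix_iff_eq_take]
      apply List.ext_getElem
      · rw [List.length_take, List.length_drop]; omega
      · intro n h1 h2
        rw [List.getElem_take, List.getElem_drop,
          getElem_flatten_replicate x hx (s + w.length) (s + n) (by omega)]
        exact hs n h1
    exact hpre.isInfix.trans (List.drop_suffix s _).isInfix

lemma getElem_rotate_pf (x : List α) (hx : x ≠ []) (i j : ℕ)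
    (hj : j < (x.rotate i).length) :
    (x.rotate i)[j] = pf x hx (i + j) := by
  rw [List.getElem_rotate]
  unfold pf
  congr 1
  rw [Nat.add_comm j i]

lemma mem_circ_iff (x : List α) (hx : x ≠ []) (w : List α) :
    w ∈ CircFactors x ↔ w.length ≤ x.length ∧ ∃ s, IsWin x hx s w := by
  have hm : 0 < x.length := List.length_pos_iff.mpr hx
  constructor
  · rintro ⟨i, hi, hinf⟩
    have hwl : w.length ≤ x.length := by
      have := hinf.length_le; rwa [List.length_rotate] at this
    refine ⟨hwl, ?_⟩
    obtain ⟨s, hsl, hget⟩ := infix_getElem hinf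
    refine ⟨i + s, fun t ht => ?_⟩
    have h' : s + t < (x.rotate i).length := by omega
    rw [← hget t ht h', getElem_rotate_pf x hx i _ h']
    exact pf_congr x hx (by rw [Nat.add_assoc])
  · rintro ⟨hwl, s, hs⟩
    refine ⟨s % x.length, Nat.mod_lt _ hm, ?_⟩
    have hpre : w <+: x.rotate (s % x.length) := by
      rw [List.prefix_iff_eq_take]
      apply List.ext_getElem
      · rw [List.length_take, List.length_rotate]; omega
      · intro n h1 h2
        rw [List.getElem_take,
          getElem_rotate_pf x hx _ n (by rw [List.length_rotate]; omega), hs n h1]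
        apply pf_congr
        rw [Nat.add_mod (s % x.length) n, Nat.mod_mod_of_dvd s dvd_rfl, ← Nat.add_mod]
    exact hpre.isInfix

/-- Orbit lemma: if `F (r + d) = F r` holds for all `r ≠ r₀`, it also holds at `r₀`. -/
lemma orbit {G β : Type*} [AddGroup G] [Fintype G] (F : G → β) (d r₀ : G)
    (h : ∀ r, r ≠ r₀ → F (r + d) = F r) : F (r₀ + d) = F r₀ := by
  rcases eq_or_ne d 0 with rfl | hd
  · simp
  · have hk1 : 0 < addOrderOf d := addOrderOf_pos d
    have key : ∀ j, 1 ≤ j → j ≤ addOrderOf d → F (r₀ + j • d) = F (r₀ + d) := by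
      intro j
      induction j with
      | zero => exact fun h1 _ => absurd h1 (by omega)
      | succ j ih =>
        intro _ hjk
        by_cases hj : j = 0
        · subst hj; simp
        · have h1j : 1 ≤ j := Nat.one_le_iff_ne_zero.mpr hj
          have hne : r₀ + j • d ≠ r₀ := by
            intro hEq
            have hz : j • d = 0 := add_eq_left.mp hEq
            have := Nat.le_of_dvd (by omega) (addOrderOf_dvd_of_nsmul_eq_zero hz)
            omega
          have hstep : F (r₀ + (j + 1) • d) = F (r₀ + j • d) := by
            rw [succ_nsmul, ← add_assoc]
            exact h (r₀ + j • d) hne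
          rw [hstep, ih h1j (by omega)]
    have hfin := key (addOrderOf d) hk1 le_rfl
    rw [addOrderOf_nsmul_eq_zero, add_zero] at hfin
    exact hfin.symm

/-- The key extension lemma: if `|u| ≥ |x| - 1`, occurrences of `a·u` and `u·b` force
`a·u·b` to occur. -/
lemma key_ext (x : List α) (hx : x ≠ []) (a b : α) (u : List α)
    (hn : x.length ≤ u.length + 1)
    (hau : ∃ s, IsWin x hx s (a :: u)) (hub : ∃ s, IsWin x hx s (u ++ [b])) :
    ∃ s, IsWin x hx s (a :: (u ++ [b])) := by
  classical
  have hm : 0 < x.length := List.length_pos_iff.mpr hx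
  haveI : NeZero x.length := ⟨hm.ne'⟩
  obtain ⟨s, hs⟩ := hau
  obtain ⟨s', hs'⟩ := hub
  set n := u.length with hnu
  have ha : a = pf x hx s := by
    have := hs 0 (by simp)
    simpa using this
  have hu1 : ∀ t (ht : t < n), u[t] = pf x hx (s + 1 + t) := by
    intro t ht
    have := hs (t + 1) (by simp; omega)
    simp only [List.getElem_cons_succ] at this
    rw [this]; congr 1; omega
  have hu2 : ∀ t (ht : t < n), u[t] = pf x hx (s' + t) := by
    intro t ht
    have := hs' t (by simp; omega)
    rwa [List.getElem_append_left ht] at this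
  have hb : b = pf x hx (s' + n) := by
    have := hs' n (by simp; omega)
    rwa [List.getElem_concat_length (l := u) (a := b) (i := n) rfl] at this
  set m := x.length with hmm
  set F : ZMod m → α := fun z => pf x hx z.val with hF
  have hFnat : ∀ nn : ℕ, F ((nn : ℕ) : ZMod m) = pf x hx nn := by
    intro nn
    show pf x hx ((nn : ZMod m)).val = pf x hx nn
    apply pf_congr
    rw [ZMod.val_natCast]
    exact Nat.mod_mod_of_dvd nn dvd_rfl
  set p : ZMod m := ((s + 1 : ℕ) : ZMod m) with hp
  set q : ZMod m := ((s' : ℕ) : ZMod m) with hq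
  have horb : F (p + (n : ZMod m) + (q - p)) = F (p + (n : ZMod m)) := by
    apply orbit
    intro r hr
    set t := (r - p).val with hT
    have htm : t < m := ZMod.val_lt _
    have hrp : ((t : ℕ) : ZMod m) = r - p := ZMod.natCast_rightInverse (r - p)
    have htn : t < n := by
      by_contra hge
      have htn' : t = n := by omega
      apply hr
      rw [← htn', hrp]
      ring
    have h1 : r + (q - p) = ((s' + t : ℕ) : ZMod m) := by
      have heq : r + (q - p) = q + (r - p) := by ring
      rw [heq, ← hrp, hq]; push_cast; ring
    have h2 : r = ((s + 1 + t : ℕ) : ZMod m) := by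
      have heq : r = p + (r - p) := by ring
      rw [heq, ← hrp, hp]; push_cast; ring
    rw [h1, hFnat]
    conv_rhs => rw [h2, hFnat]
    rw [← hu2 t htn, hu1 t htn]
  have hkey : pf x hx (s' + n) = pf x hx (s + 1 + n) := by
    have h1 : p + (n : ZMod m) + (q - p) = ((s' + n : ℕ) : ZMod m) := by
      rw [hp, hq]; push_cast; ring
    have h2 : p + (n : ZMod m) = ((s + 1 + n : ℕ) : ZMod m) := by
      rw [hp]; push_cast; ring
    rw [h1, h2, hFnat, hFnat] at horb
    exact horb
  refine ⟨s, fun t ht => ?_⟩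
  have ht2 : t < u.length + 2 := by simp at ht; omega
  rcases t with _ | j
  · simpa using ha
  · simp only [List.getElem_cons_succ]
    by_cases hj : j < n
    · rw [List.getElem_append_left hj, hu1 j hj]
      congr 1; omega
    · have hjn : j = u.length := by omega
      rw [List.getElem_concat_length (l := u) (a := b) (i := j) hjn, hb, hkey]
      rw [hjn]
      congr 1
      omega

end MAWAux

open MAWAux in
/-- For a nonempty word `x`, the minimal absent words of `F_{x̃*}`
are exactly the minimal absent words of `F_x̃` of length at most `|x|`:
`M_{F_{x̃*}} = M_{F_x̃} ∩ Σ^{≤|x|}`. -/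
theorem maw_star_eq_maw_circ_inter_short {α : Type*} [Fintype α]
    (x : List α) (hx : x ≠ []) :
    MAWLang (StarFactors x) =
      MAWLang (CircFactors x) ∩ {w : List α | w.length ≤ x.length} := by
  have hm : 0 < x.length := List.length_pos_iff.mpr hx
  ext w
  simp only [Set.mem_inter_iff, Set.mem_setOf_eq]
  constructor
  · rintro ⟨a, b, u, rfl, hw, hau, hub⟩
    by_cases hlen : (a :: (u ++ [b])).length ≤ x.length
    · refine ⟨⟨a, b, u, rfl, ?_, ?_, ?_⟩, hlen⟩
      · intro hc
        exact hw ((mem_star_iff x hx _).mpr ((mem_circ_iff x hx _).mp hc).2)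
      · refine (mem_circ_iff x hx _).mpr ⟨?_, (mem_star_iff x hx _).mp hau⟩
        simp only [List.length_cons, List.length_append, List.length_singleton, List.length_nil] at hlen ⊢
        omega
      · refine (mem_circ_iff x hx _).mpr ⟨?_, (mem_star_iff x hx _).mp hub⟩
        simp only [List.length_cons, List.length_append, List.length_singleton, List.length_nil] at hlen ⊢
        omega
    · exfalso
      apply hw
      apply (mem_star_iff x hx _).mpr
      apply key_ext x hx a b u
      · simp only [List.length_cons, List.length_append, List.length_singleton, List.length_nil] at hlen
        omega
      · exact (mem_star_iff x hx _).mp hau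
      · exact (mem_star_iff x hx _).mp hub
  · rintro ⟨⟨a, b, u, rfl, hw, hau, hub⟩, hlen⟩
    refine ⟨a, b, u, rfl, ?_, ?_, ?_⟩
    · intro hc
      exact hw ((mem_circ_iff x hx _).mpr ⟨hlen, (mem_star_iff x hx _).mp hc⟩)
    · exact (mem_star_iff x hx _).mpr ((mem_circ_iff x hx _).mp hau).2
    · exact (mem_star_iff x hx _).mpr ((mem_circ_iff x hx _).mp hub).2
end

section
/- Let y be a word of length n ≥ 1 over a finite alphabet Σ such that every letter of Σ occurs in y. Then y has a minimal absent word of length n+1 if and only if y is the concatenation of n copies of a single letter. -/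
/-!
If `w = a :: t` is a minimal absent word of `y` of length `|y| + 1`, then both `t` and the
prefix of `w` of length `|y|` are proper factors of `w`, hence factors of `y` of length `|y|`,
hence equal to `y`. So `y = t` is a period-one word: each letter equals its predecessor, and
the first one equals `a`. Conversely `a^(n+1)` is a minimal absent word of `a^n`.
-/

/-- The set of minimal absent words of a word `y`: words that are not factors of `y`
all of whose proper factors are factors of `y`. -/
def MAWWord {α : Type*} (y : List α) : Set (List α) :=
  {w | ¬ w <:+: y ∧ ∀ v, v <:+: w → v ≠ w → v <:+: y}

namespace List

theorem eq_replicate_of_dropLast_cons_eq {α : Type*} (a : α) :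
    ∀ t : List α, (a :: t).dropLast = t → t = replicate t.length a
  | [], _ => rfl
  | b :: t, h => by
    obtain ⟨rfl, ht⟩ := cons_eq_cons.mp (dropLast_cons_cons ▸ h)
    rw [length_cons, replicate_succ, ← eq_replicate_of_dropLast_cons_eq a t ht]

end List

section

open List

variable {α : Type*}

theorem MAWWord.infix_of_infix_of_length_lt {y w v : List α} (hw : w ∈ MAWWord y)
    (hv : v <:+: w) (hlen : v.length < w.length) : v <:+: y :=
  hw.2 v hv (ne_of_apply_ne length hlen.ne)

theorem MAWWord.eq_of_infix_of_length_eq {y w v : List α} (hw : w ∈ MAWWord y)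
    (hv : v <:+: w) (hvlen : v.length = y.length) (hwlen : w.length = y.length + 1) : v = y :=
  (MAWWord.infix_of_infix_of_length_lt hw hv (by omega)).eq_of_length hvlen

theorem replicate_succ_mem_MAWWord (a : α) (n : ℕ) :
    replicate (n + 1) a ∈ MAWWord (replicate n a) := by
  refine ⟨fun h => by simpa using h.length_le, fun v hv hne => ?_⟩
  obtain ⟨hvlen, hv⟩ := infix_replicate_iff.mp hv
  refine infix_replicate_iff.mpr ⟨?_, hv⟩
  by_contra! h
  exact hne (by rw [hv, show v.length = n + 1 by omega])

end

theorem maw_of_length_succ_iff_power_of_letter_general {α : Type*}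
    (y : List α) :
    (∃ w ∈ MAWWord y, w.length = y.length + 1) ↔
      ∃ a : α, y = List.replicate y.length a := by
  constructor
  · rintro ⟨w, hw, hwlen⟩
    obtain ⟨a, t, rfl⟩ := List.exists_cons_of_length_eq_add_one hwlen
    have htlen : t.length = y.length := by simpa using hwlen
    have ht : t = y :=
      MAWWord.eq_of_infix_of_length_eq hw (List.suffix_cons a t).isInfix htlen hwlen
    have hinit : (a :: t).dropLast = y :=
      MAWWord.eq_of_infix_of_length_eq hw (List.dropLast_prefix _).isInfix
        (by rw [List.length_dropLast_cons, htlen]) hwlen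
    subst ht
    exact ⟨a, List.eq_replicate_of_dropLast_cons_eq a t hinit⟩
  · rintro ⟨a, hy⟩
    refine ⟨List.replicate (y.length + 1) a, ?_, List.length_replicate⟩
    rw [hy, List.length_replicate]
    exact replicate_succ_mem_MAWWord a y.length

/-- If `y` is a word of length `n ≥ 1` over a finite alphabet in which
every letter of the alphabet occurs, then `y` has a minimal absent word of length
`n + 1` if and only if `y` is the concatenation of `n` copies of a single letter. -/
theorem maw_of_length_succ_iff_power_of_letter {α : Type*} [Fintype α]
    (y : List α) (hy : y ≠ []) (hall : ∀ a : α, a ∈ y) :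
    (∃ w ∈ MAWWord y, w.length = y.length + 1) ↔
      ∃ a : α, y = List.replicate y.length a :=
  maw_of_length_succ_iff_power_of_letter_general y
end

section
/- Let y be a word of length n over a finite alphabet Σ containing occurrences of at least two different letters. Then every minimal absent word of y has length at most n. -/
lemma all_eq_of_cons_eq_append {α : Type*} :
    ∀ (y : List α) (c d : α), c :: y = y ++ [d] → ∀ x ∈ y, x = c := by
  intro y
  induction y with
  | nil => intro c d _ x hx; simp at hx
  | cons a t ih =>
    intro c d hcd x hx
    simp only [List.cons_append, List.cons.injEq] at hcd
    obtain ⟨rfl, h2⟩ := hcd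
    rcases List.mem_cons.mp hx with rfl | hx
    · rfl
    · exact ih c d h2 x hx

/-- If a word `y` of length `n` over a finite alphabet contains
occurrences of at least two different letters, then every minimal absent word of `y`
has length at most `n`. -/
theorem maw_length_le_of_two_letters {α : Type*} [Fintype α] (y : List α)
    (h : ∃ a ∈ y, ∃ b ∈ y, a ≠ b) :
    ∀ w ∈ MAWWord y, w.length ≤ y.length := by
  rintro w ⟨hnot, hmin⟩
  by_contra hlen
  push_neg at hlen
  have hwne : w ≠ [] := by
    rintro rfl; exact hnot List.nil_infix
  -- dropLast w is a proper factor of w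
  have hdne : w.dropLast ≠ w := by
    intro he
    have := congrArg List.length he
    rw [List.length_dropLast] at this
    omega
  have hdinf : w.dropLast <:+: y := hmin _ (List.dropLast_prefix w).isInfix hdne
  have hdlen : w.length - 1 ≤ y.length := by
    have := hdinf.length_le
    rwa [List.length_dropLast] at this
  have hlen' : w.length = y.length + 1 := by omega
  have htne : w.tail ≠ w := by
    intro he
    have := congrArg List.length he
    rw [List.length_tail] at this
    omega
  have htinf : w.tail <:+: y := hmin _ (List.tail_suffix w).isInfix htne
  have hdeq : w.dropLast = y :=
    hdinf.eq_of_length (by rw [List.length_dropLast]; omega)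
  have hteq : w.tail = y :=
    htinf.eq_of_length (by rw [List.length_tail]; omega)
  have hw1 : w.head hwne :: y = w := by rw [← hteq]; exact List.cons_head_tail hwne
  have hw2 : y ++ [w.getLast hwne] = w := by
    rw [← hdeq]; exact List.dropLast_append_getLast hwne
  have hkey : w.head hwne :: y = y ++ [w.getLast hwne] := by rw [hw1, hw2]
  obtain ⟨a, ha, b, hb, hab⟩ := h
  have := all_eq_of_cons_eq_append y _ _ hkey
  exact hab ((this a ha).trans (this b hb).symm)
end
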